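/- arXiv:1004.3232 — 6 statements merged into one kernel-verified Lean document; each statement's English description precedes it below -/
import Mathlib

section
/- Let â(z) be a polynomial of degree n with real coefficients such that â(z) and â(−z) are relatively prime. Then for each 1 ≤ i ≤ n and each sign ⋆ ∈ {+,−} there exists a unique polynomial p_i^⋆(z) of degree less than n such that â(z)·p_i^⋆(z) ⋆ â(−z)·p_i^⋆(−z) = 2·z^{2i−ℓ^⋆}, where ℓ^+ = 2 and ℓ^− = 1. -/
/-!
Write `S g = g + ε g(-z)` with `ε = ±1`; the equations read `S (â p) = f` where `f(-z) = ε f`.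
A Bézout identity `u â + v â(-z) = 1` gives `w = u + v(-z)` with `â w + (â w)(-z) = 2`, so
`p = w f / 2` solves the equation, but without the degree bound. Replacing `p` by its remainder
modulo `â(-z)` changes `S (â p)` by a multiple of `â(z) â(-z)`, a polynomial of degree `2n`
unless it vanishes; as `f` and `S (â p)` both have degree `< 2n`, the remainder is again a
solution. Uniqueness: `S (â p) = 0` forces `â ∣ â(-z) p(-z)`, hence `â ∣ p(-z)`, which for
`deg p < n` means `p = 0`.
-/

open Polynomial

namespace Polynomial

variable {K : Type*} [Field K] {a f p : K[X]} {ε : K}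

lemma ne_zero_of_isCoprime_comp_neg_X (hcop : IsCoprime a (a.comp (-X))) : a ≠ 0 := by
  simpa using hcop.ne_zero_or_ne_zero

lemma degree_add_C_mul_comp_neg_X_le (hε : ε ≠ 0) (g : K[X]) :
    (g + C ε * g.comp (-X)).degree ≤ g.degree :=
  (degree_add_le _ _).trans (max_le le_rfl (by rw [degree_C_mul hε, degree_comp_neg_X]))

lemma degree_mul_lt_degree_mul_comp_neg_X (ha : a ≠ 0) (hp : p.degree < a.degree) :
    (a * p).degree < (a * a.comp (-X)).degree := by
  rw [degree_mul, degree_mul, degree_comp_neg_X]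
  exact WithBot.add_lt_add_left (degree_ne_bot.mpr ha) hp

lemma eq_zero_of_mul_add_C_mul_comp_neg_X_eq_zero (hcop : IsCoprime a (a.comp (-X)))
    (hε : ε ≠ 0) (hp : p.degree < a.degree) (h : a * p + C ε * (a * p).comp (-X) = 0) :
    p = 0 := by
  have hdvd : a ∣ p.comp (-X) := by
    refine hcop.dvd_of_dvd_mul_left ⟨-C ε⁻¹ * p, ?_⟩
    rw [mul_comp] at h
    have hεε : C ε⁻¹ * C ε = 1 := by rw [← C_mul, inv_mul_cancel₀ hε, C_1]
    linear_combination C ε⁻¹ * h - a.comp (-X) * p.comp (-X) * hεε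
  rw [← comp_neg_X_eq_zero_iff]
  exact eq_zero_of_dvd_of_degree_lt hdvd (by rwa [degree_comp_neg_X])

lemma exists_mul_add_C_mul_comp_neg_X_eq (h2 : (2 : K) ≠ 0) (hε : ε * ε = 1)
    (hcop : IsCoprime a (a.comp (-X))) (hf : f.comp (-X) = C ε * f) :
    ∃ p, a * p + C ε * (a * p).comp (-X) = f := by
  obtain ⟨u, v, huv⟩ := hcop
  set w := u + v.comp (-X)
  have hw : a * w + (a * w).comp (-X) = 2 := by
    have huv' := congrArg (·.comp (-X)) huv
    simp only [add_comp, mul_comp, comp_neg_X_comp_neg_X, one_comp] at huv'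
    simp only [w, add_comp, mul_comp, comp_neg_X_comp_neg_X]
    linear_combination huv + huv'
  refine ⟨C 2⁻¹ * w * f, ?_⟩
  have h2' : C (2⁻¹ : K) * 2 = 1 := by
    rw [show (2 : K[X]) = C 2 from (map_ofNat C 2).symm, ← C_mul, inv_mul_cancel₀ h2, C_1]
  have hεε : C ε * C ε = 1 := by rw [← C_mul, hε, C_1]
  simp only [mul_comp, C_comp, hf] at hw ⊢
  linear_combination C 2⁻¹ * f * hw + f * h2' + C 2⁻¹ * f * a.comp (-X) * w.comp (-X) * hεε

theorem existsUnique_mul_add_C_mul_comp_neg_X_eq (h2 : (2 : K) ≠ 0) (hε : ε * ε = 1)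
    (hcop : IsCoprime a (a.comp (-X))) (hf : f.comp (-X) = C ε * f)
    (hfd : f.degree < (a * a.comp (-X)).degree) :
    ∃! p, p.degree < a.degree ∧ a * p + C ε * (a * p).comp (-X) = f := by
  have ha := ne_zero_of_isCoprime_comp_neg_X hcop
  have hε₀ : ε ≠ 0 := left_ne_zero_of_mul_eq_one hε
  obtain ⟨p₀, hp₀⟩ := exists_mul_add_C_mul_comp_neg_X_eq h2 hε hcop hf
  set p := p₀ % a.comp (-X)
  have hp : p.degree < a.degree := by
    simpa using degree_mod_lt p₀ (comp_neg_X_eq_zero_iff.not.mpr ha)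
  have hdvd : a * a.comp (-X) ∣ f - (a * p + C ε * (a * p).comp (-X)) := by
    set k := p₀ / a.comp (-X)
    refine ⟨k + C ε * k.comp (-X), ?_⟩
    rw [← hp₀, ← EuclideanDomain.mod_add_div p₀ (a.comp (-X))]
    simp only [mul_comp, add_comp, comp_neg_X_comp_neg_X]
    ring
  have hlt : (f - (a * p + C ε * (a * p).comp (-X))).degree < (a * a.comp (-X)).degree :=
    (degree_sub_le _ _).trans_lt <| max_lt hfd <|
      (degree_add_C_mul_comp_neg_X_le hε₀ _).trans_lt (degree_mul_lt_degree_mul_comp_neg_X ha hp)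
  have hpf : a * p + C ε * (a * p).comp (-X) = f :=
    (sub_eq_zero.mp (eq_zero_of_dvd_of_degree_lt hdvd hlt)).symm
  refine ⟨p, ⟨hp, hpf⟩, fun q ⟨hq, hqf⟩ ↦ sub_eq_zero.mp ?_⟩
  refine eq_zero_of_mul_add_C_mul_comp_neg_X_eq_zero hcop hε₀
    ((degree_sub_le _ _).trans_lt (max_lt hq hp)) ?_
  rw [mul_sub, sub_comp]
  linear_combination hqf - hpf

lemma C_mul_X_pow_comp_neg_X (c : K) (m : ℕ) :
    (C c * X ^ m).comp (-X) = C ((-1) ^ m) * (C c * X ^ m) := by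
  simp only [mul_comp, C_comp, pow_comp, X_comp, neg_pow (X : K[X]), map_pow, map_neg, map_one]
  ring

theorem existsUnique_mul_add_C_mul_comp_neg_X_eq_C_mul_X_pow (h2 : (2 : K) ≠ 0)
    (hcop : IsCoprime a (a.comp (-X))) (c : K) {m : ℕ} (hm : m < 2 * a.natDegree) :
    ∃! p : K[X], p.degree < (a.natDegree : WithBot ℕ) ∧
      a * p + C ((-1) ^ m) * (a * p).comp (-X) = C c * X ^ m := by
  have ha := ne_zero_of_isCoprime_comp_neg_X hcop
  rw [← degree_eq_natDegree ha]
  refine existsUnique_mul_add_C_mul_comp_neg_X_eq h2 (by rw [← mul_pow]; simp) hcop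
    (C_mul_X_pow_comp_neg_X c m) ((degree_C_mul_X_pow_le m c).trans_lt ?_)
  rw [degree_mul, degree_comp_neg_X, degree_eq_natDegree ha]
  exact_mod_cast (by omega : m < a.natDegree + a.natDegree)

end Polynomial

theorem unique_bezout_solutions_general (n : ℕ) (ahat : Polynomial ℝ)
    (hdeg : ahat.natDegree = n)
    (hcop : IsCoprime ahat (ahat.comp (-X))) :
    ∀ i : ℕ, 1 ≤ i → i ≤ n →
      (∃! p : Polynomial ℝ, p.degree < (n : ℕ) ∧
        ahat * p + (ahat.comp (-X)) * (p.comp (-X)) = C 2 * X ^ (2 * i - 2)) ∧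
      (∃! p : Polynomial ℝ, p.degree < (n : ℕ) ∧
        ahat * p - (ahat.comp (-X)) * (p.comp (-X)) = C 2 * X ^ (2 * i - 1)) := by
  intro i hi hin
  subst hdeg
  have heven := existsUnique_mul_add_C_mul_comp_neg_X_eq_C_mul_X_pow two_ne_zero hcop 2
    (m := 2 * i - 2) (by omega)
  have hodd := existsUnique_mul_add_C_mul_comp_neg_X_eq_C_mul_X_pow two_ne_zero hcop 2
    (m := 2 * i - 1) (by omega)
  rw [Even.neg_one_pow ⟨i - 1, by omega⟩] at heven
  rw [Odd.neg_one_pow ⟨i - 1, by omega⟩] at hodd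
  simp only [mul_comp, map_one, one_mul, map_neg, neg_mul, ← sub_eq_add_neg] at heven hodd
  exact ⟨heven, hodd⟩

/-- If `ahat` is a degree-`n` polynomial with `ahat(z)` and `ahat(-z)` relatively prime,
then for each `1 ≤ i ≤ n` and each sign `⋆ ∈ {+,-}` there is a unique polynomial `p` of
degree `< n` with `ahat(z)p(z) ⋆ ahat(-z)p(-z) = 2 z^{2i-ℓ^⋆}`, where `ℓ^+ = 2`, `ℓ^- = 1`. -/
theorem unique_bezout_solutions (n : ℕ) (ahat : Polynomial ℝ)
    (hdeg : ahat.natDegree = n) (hahat : ahat ≠ 0)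
    (hcop : IsCoprime ahat (ahat.comp (-X))) :
    ∀ i : ℕ, 1 ≤ i → i ≤ n →
      (∃! p : Polynomial ℝ, p.degree < (n : ℕ) ∧
        ahat * p + (ahat.comp (-X)) * (p.comp (-X)) = C 2 * X ^ (2 * i - 2)) ∧
      (∃! p : Polynomial ℝ, p.degree < (n : ℕ) ∧
        ahat * p - (ahat.comp (-X)) * (p.comp (-X)) = C 2 * X ^ (2 * i - 1)) :=
  unique_bezout_solutions_general n ahat hdeg hcop
end

section
/- Let â(z) be a degree-n polynomial relatively prime with â(−z) and satisfying â(1) = 2 and â(−1) = 0. For 1 ≤ i ≤ n let p_i^−(z) be the unique polynomial of degree < n with â(z)p_i^−(z) − â(−z)p_i^−(−z) = 2z^{2i−1}. Then the Laurent polynomial m_i(z) := â(z)·p_i^−(z)/z^{2i−1} satisfies m_i(z) + m_i(−z) = 2 for all z ≠ 0 (i.e. m_i is an interpolatory symbol), and moreover m_i(1) = 2 and m_i(−1) = 0. -/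
open Polynomial

/-- If `â` is a degree-`n` polynomial coprime with `â(-z)`, with `â(1)=2`,
`â(-1)=0`, and `p_i⁻` is the unique degree-`<n` solution of
`â(z)p(z) - â(-z)p(-z) = 2z^{2i-1}`, then `m_i(z) := â(z)p_i⁻(z)/z^{2i-1}` is an
interpolatory symbol (`m_i(z) + m_i(-z) = 2` for `z ≠ 0`), with `m_i(1)=2`, `m_i(-1)=0`. -/
theorem interpolatory_symbol_from_bezout (n i : ℕ) (hi : 1 ≤ i) (hin : i ≤ n)
    (ahat : Polynomial ℂ) (hdeg : ahat.natDegree = n) (hne : ahat ≠ 0)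
    (hcop : IsCoprime ahat (ahat.comp (-X)))
    (h1 : ahat.eval 1 = 2) (hm1 : ahat.eval (-1) = 0)
    (p : Polynomial ℂ) (hpdeg : p.degree < (n : ℕ))
    (hpeq : ahat * p - (ahat.comp (-X)) * (p.comp (-X)) = C 2 * X ^ (2 * i - 1))
    (m : ℂ → ℂ) (hm : ∀ z : ℂ, m z = ahat.eval z * p.eval z / z ^ (2 * i - 1)) :
    (∀ z : ℂ, z ≠ 0 → m z + m (-z) = 2) ∧ m 1 = 2 ∧ m (-1) = 0 := by
  have hodd : Odd (2 * i - 1) := ⟨i - 1, by omega⟩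
  have key : ∀ z : ℂ, ahat.eval z * p.eval z - ahat.eval (-z) * p.eval (-z)
      = 2 * z ^ (2 * i - 1) := by
    intro z
    have := congrArg (Polynomial.eval z) hpeq
    simpa [eval_comp] using this
  refine ⟨?_, ?_, ?_⟩
  · intro z hz
    have hzk : z ^ (2 * i - 1) ≠ 0 := pow_ne_zero _ hz
    rw [hm z, hm (-z), hodd.neg_pow, div_neg, ← sub_eq_add_neg, ← sub_div, key z,
      mul_div_assoc, div_self hzk, mul_one]
  · have h := key 1
    rw [hm1] at h
    simp at h
    rw [hm 1]
    simp [h]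
  · rw [hm (-1), hm1]
    simp
end

section
/- Let â(z) = â_n ∏_{j=0}^{m} (z − z_j)^{k_j} with distinct roots z_j, k_0 + … + k_m = n, and suppose â(z) and â(−z) are relatively prime (equivalently z_i ≠ 0 and z_i ≠ −z_j for all i,j). Then the unique polynomial solution p_t^⋆(z) of degree < n of â(z)p_t^⋆(z) ⋆ â(−z)p_t^⋆(−z) = 2z^{2t−ℓ^⋆} admits the explicit representation p_t^⋆(z) = (−1)^{ℓ^⋆} â_n^{−1} ∏_{j=0}^{m}(z+z_j)^{k_j} · Σ_{i=0}^{m} Σ_{s=1}^{k_i} (−1)^s c_{i,k_i−s}/(z+z_i)^s, where c_{i,j} = (1/j!) d^j/dz^j [ 2z^{2t−ℓ^⋆} / ω_i(z) ] evaluated at z = z_i, ω(z) is the monic polynomial associated with â(z)â(−z), and ω_i(z) = ω(z)/(z−z_i)^{k_i}. -/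
/-!
Write `â = aₙ A` with `A = ∏ (X - zᵢ)^kᵢ`; then `â(-X) = (-1)ⁿ aₙ B` with `B = ∏ (X + zᵢ)^kᵢ`, and
`A`, `B` are coprime. Modulo `A` the Bezout equation says that `r = (-1)ⁿ ε aₙ p(-X)`, a polynomial
of degree `< n = deg A`, satisfies `B r ≡ 2X^{2t-ℓ}`, and such an `r` is unique. The Hermite
interpolant `Q = ∑ᵢ (ωᵢ / B) Tᵢ`, where `Tᵢ` is the Taylor polynomial of order `kᵢ` of
`2X^{2t-ℓ} / ωᵢ` at `zᵢ`, is another: modulo `(X - zᵢ)^kᵢ` only the `i`-th term survives, and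
`ωᵢ Tᵢ ≡ 2X^{2t-ℓ}` there because the order of vanishing of a polynomial function is its root
multiplicity. Hence `p(w) = ((-1)ⁿ ε aₙ)⁻¹ Q(-w)`, and `Q / A` is the partial fraction
`∑ᵢ ∑ₛ c_{i,kᵢ-s} / (X - zᵢ)^s`.
-/

open Polynomial Finset Filter Topology
open scoped Nat

section Analytic

variable {𝕜 : Type*} [NontriviallyNormedField 𝕜]

theorem Polynomial.analyticAt_eval (p : 𝕜[X]) (a : 𝕜) : AnalyticAt 𝕜 (fun x => p.eval x) a :=
  AnalyticOnNhd.eval_polynomial p a trivial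

theorem Polynomial.analyticOrderAt_eval_eq_rootMultiplicity {p : 𝕜[X]} (hp : p ≠ 0) (a : 𝕜) :
    analyticOrderAt (fun x => p.eval x) a = p.rootMultiplicity a := by
  obtain ⟨q, hpq, hq⟩ := p.exists_eq_pow_rootMultiplicity_mul_and_not_dvd hp a
  refine (p.analyticAt_eval a).analyticOrderAt_eq_natCast.mpr
    ⟨fun x => q.eval x, q.analyticAt_eval a, ?_, ?_⟩
  · rwa [dvd_iff_isRoot] at hq
  · exact Eventually.of_forall fun x => by
      conv_lhs => rw [hpq]
      simp

theorem Polynomial.X_sub_C_pow_dvd_of_le_analyticOrderAt {p : 𝕜[X]} {a : 𝕜} {m : ℕ}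
    (h : (m : ℕ∞) ≤ analyticOrderAt (fun x => p.eval x) a) : (X - C a) ^ m ∣ p := by
  rcases eq_or_ne p 0 with rfl | hp
  · exact dvd_zero _
  rwa [← le_rootMultiplicity_iff hp, ← Nat.cast_le (α := ℕ∞),
    ← analyticOrderAt_eval_eq_rootMultiplicity hp]

variable [CharZero 𝕜] [CompleteSpace 𝕜]

theorem AnalyticAt.exists_eq_taylor_add_pow_mul {g : 𝕜 → 𝕜} {a : 𝕜} (hg : AnalyticAt 𝕜 g a)
    (m : ℕ) : ∃ F : 𝕜 → 𝕜, AnalyticAt 𝕜 F a ∧ ∀ w, g w =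
      ∑ j ∈ range m, 1 / (j ! : 𝕜) * iteratedDeriv j g a * (w - a) ^ j + (w - a) ^ m * F w := by
  have hshift : AnalyticAt 𝕜 (fun z => g (z + a)) 0 := hg.comp_of_eq (by fun_prop) (zero_add a)
  obtain ⟨F, hF, hgF⟩ := hshift.exists_eq_sum_add_pow_mul m
  refine ⟨fun w => F (w - a), hF.comp_of_eq (by fun_prop) (sub_self a), fun w => ?_⟩
  have hw := hgF (w - a)
  simp only [sub_add_cancel, iteratedDeriv_comp_add_const, zero_add, smul_eq_mul] at hw
  rw [hw]
  congr 1
  refine sum_congr rfl fun j _ => ?_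
  ring

theorem X_sub_C_pow_dvd_sub_mul_taylor (u h : 𝕜[X]) {a : 𝕜} (ha : h.eval a ≠ 0) (m : ℕ) :
    (X - C a) ^ m ∣ u - h * ∑ j ∈ range m,
      C (1 / (j ! : 𝕜) * iteratedDeriv j (fun w => u.eval w / h.eval w) a) * (X - C a) ^ j := by
  have hu := u.analyticAt_eval a
  have hh := h.analyticAt_eval a
  obtain ⟨F, hF, hgF⟩ := (hu.fun_div hh ha).exists_eq_taylor_add_pow_mul m
  -- near `a`, `u - h T = h (u / h - T) = (X - a)^m h F`
  apply X_sub_C_pow_dvd_of_le_analyticOrderAt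
  rw [natCast_le_analyticOrderAt (analyticAt_eval _ a)]
  refine ⟨fun w => h.eval w * F w, hh.mul hF, ?_⟩
  filter_upwards [h.continuous.continuousAt.eventually_ne ha] with w hw
  have hw' := hgF w
  rw [div_eq_iff hw] at hw'
  simp only [eval_sub, eval_mul, eval_finsetSum, eval_C, eval_pow, eval_X, smul_eq_mul]
  linear_combination hw'

end Analytic

section PartialFractions

variable {K : Type*} [Field K] {ι : Type*}

theorem degree_prod_X_sub_C_pow (s : Finset ι) (z : ι → K) (k : ι → ℕ) :
    (∏ j ∈ s, (X - C (z j)) ^ k j).degree = ↑(∑ j ∈ s, k j) := by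
  simp [degree_prod]

theorem comp_neg_X_prod_X_sub_C_pow (s : Finset ι) (z : ι → K) (k : ι → ℕ) :
    (∏ j ∈ s, (X - C (z j)) ^ k j).comp (-X)
      = C ((-1) ^ ∑ j ∈ s, k j) * ∏ j ∈ s, (X + C (z j)) ^ k j := by
  have h : ∀ j ∈ s, ((X - C (z j)) ^ k j).comp (-X) = C ((-1) ^ k j) * (X + C (z j)) ^ k j :=
    fun j _ => by
      simp only [pow_comp, sub_comp, X_comp, C_comp, C_pow, map_neg, map_one, ← mul_pow]
      ring
  rw [Polynomial.prod_comp, prod_congr rfl h, prod_mul_distrib, ← map_prod, prod_pow_eq_pow_sum]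

theorem degree_sum_C_mul_X_sub_C_pow_lt (c : ℕ → K) (a : K) (m : ℕ) :
    (∑ j ∈ range m, C (c j) * (X - C a) ^ j).degree < (m : WithBot ℕ) := by
  refine (degree_sum_le _ _).trans_lt ((Finset.sup_lt_iff (WithBot.bot_lt_coe m)).2 fun j hj => ?_)
  calc (C (c j) * (X - C a) ^ j).degree ≤ (j : WithBot ℕ) := by compute_degree!
    _ < m := by exact_mod_cast mem_range.1 hj

theorem sum_range_mul_pow_eq_pow_mul_sum_Icc_div (c : ℕ → K) {y : K} (hy : y ≠ 0) (m : ℕ) :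
    ∑ j ∈ range m, c j * y ^ j = y ^ m * ∑ s ∈ Icc 1 m, c (m - s) / y ^ s := by
  rw [mul_sum]
  refine sum_nbij' (fun j => m - j) (fun s => m - s) (fun j hj => ?_) (fun s hs => ?_)
    (fun j hj => ?_) (fun s hs => ?_) (fun j hj => ?_)
  · simp only [mem_range, mem_Icc] at hj ⊢; omega
  · simp only [mem_range, mem_Icc] at hs ⊢; omega
  · simp only [mem_range] at hj; omega
  · simp only [mem_Icc] at hs; omega
  · rw [mem_range] at hj
    rw [Nat.sub_sub_self hj.le, mul_div_assoc', eq_div_iff (pow_ne_zero _ hy), mul_assoc, ← pow_add,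
      Nat.add_sub_cancel' hj.le, mul_comm]

theorem eq_of_dvd_mul_sub_of_degree_lt {A B f r q : K[X]} (hAB : IsCoprime A B)
    (hr : A ∣ B * r - f) (hq : A ∣ B * q - f) (hrA : r.degree < A.degree)
    (hqA : q.degree < A.degree) : r = q := by
  have hdvd : A ∣ r - q := hAB.dvd_of_dvd_mul_left (by simpa [mul_sub] using dvd_sub hr hq)
  exact sub_eq_zero.1 <| eq_zero_of_dvd_of_degree_lt hdvd <|
    (degree_sub_le _ _).trans_lt (max_lt hrA hqA)

variable [Fintype ι] [DecidableEq ι]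

theorem prod_X_sub_C_pow_dvd_sub_sum {z : ι → K} (hz : Function.Injective z) (k : ι → ℕ)
    (f : K[X]) (S : ι → K[X])
    (hS : ∀ i, (X - C (z i)) ^ k i ∣ f - (∏ j ∈ univ.erase i, (X - C (z j)) ^ k j) * S i) :
    ∏ i, (X - C (z i)) ^ k i ∣ f - ∑ i, (∏ j ∈ univ.erase i, (X - C (z j)) ^ k j) * S i := by
  refine prod_dvd_of_coprime (fun i _ j _ hij => ?_) fun i _ => ?_
  · exact IsCoprime.pow (pairwise_coprime_X_sub_C hz hij)
  rw [← add_sum_erase _ _ (mem_univ i), ← sub_sub]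
  refine dvd_sub (hS i) (dvd_sum fun j hj => ?_)
  have hij : i ∈ univ.erase j := mem_erase.2 ⟨(ne_of_mem_erase hj).symm, mem_univ i⟩
  exact dvd_mul_of_dvd_left (dvd_prod_of_mem (fun l => (X - C (z l)) ^ k l) hij) _

noncomputable def partialFractionNumerator (z : ι → K) (k : ι → ℕ) (c : ι → ℕ → K) : K[X] :=
  ∑ i, (∏ j ∈ univ.erase i, (X - C (z j)) ^ k j) * ∑ j ∈ range (k i), C (c i j) * (X - C (z i)) ^ j

theorem degree_partialFractionNumerator_lt (z : ι → K) (k : ι → ℕ) (c : ι → ℕ → K) :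
    (partialFractionNumerator z k c).degree < ↑(∑ i, k i) := by
  refine (degree_sum_le _ _).trans_lt ((Finset.sup_lt_iff (WithBot.bot_lt_coe _)).2 fun i _ => ?_)
  rw [degree_mul, degree_prod_X_sub_C_pow, ← add_sum_erase _ _ (mem_univ i), add_comm (k i),
    Nat.cast_add]
  exact WithBot.add_lt_add_left WithBot.coe_ne_bot (degree_sum_C_mul_X_sub_C_pow_lt _ _ _)

theorem eval_partialFractionNumerator (z : ι → K) (k : ι → ℕ) (c : ι → ℕ → K) {x : K}
    (hx : ∀ i, x ≠ z i) :
    (partialFractionNumerator z k c).eval x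
      = (∏ i, (x - z i) ^ k i) * ∑ i, ∑ s ∈ Icc 1 (k i), c i (k i - s) / (x - z i) ^ s := by
  simp only [partialFractionNumerator, eval_finsetSum, eval_mul, eval_prod, eval_pow, eval_sub,
    eval_X, eval_C]
  rw [mul_sum]
  refine sum_congr rfl fun i _ => ?_
  rw [sum_range_mul_pow_eq_pow_mul_sum_Icc_div _ (sub_ne_zero.2 (hx i)),
    ← mul_prod_erase _ _ (mem_univ i)]
  ring

theorem eval_neg_partialFractionNumerator (z : ι → K) (k : ι → ℕ) (c : ι → ℕ → K) {w : K}
    (hw : ∀ i, w ≠ -z i) :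
    (partialFractionNumerator z k c).eval (-w) = (-1) ^ (∑ i, k i) * (∏ i, (w + z i) ^ k i) *
      ∑ i, ∑ s ∈ Icc 1 (k i), (-1) ^ s * c i (k i - s) / (w + z i) ^ s := by
  have hneg : ∀ i, -w - z i = -1 * (w + z i) := fun i => by ring
  rw [eval_partialFractionNumerator z k c fun i h => hw i (by linear_combination -h)]
  simp only [hneg, mul_pow, prod_mul_distrib, prod_pow_eq_pow_sum]
  congr 1
  refine sum_congr rfl fun i _ => sum_congr rfl fun s _ => ?_
  rw [mul_comm, ← div_div, div_eq_mul_inv _ ((-1) ^ s), ← inv_pow, inv_neg_one]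
  ring

end PartialFractions

section Hermite

variable {𝕜 : Type*} [NontriviallyNormedField 𝕜] [CharZero 𝕜] [CompleteSpace 𝕜]
  {ι : Type*} [Fintype ι] [DecidableEq ι]

theorem prod_dvd_mul_partialFractionNumerator_sub {z : ι → 𝕜} (hz : Function.Injective z)
    (k : ι → ℕ) (f B : 𝕜[X]) (hB : IsCoprime (∏ i, (X - C (z i)) ^ k i) B) (c : ι → ℕ → 𝕜)
    (hc : ∀ i j, c i j = 1 / (j ! : 𝕜) * iteratedDeriv j
      (fun w => f.eval w / ((∏ l ∈ univ.erase i, (X - C (z l)) ^ k l) * B).eval w) (z i)) :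
    ∏ i, (X - C (z i)) ^ k i ∣ B * partialFractionNumerator z k c - f := by
  rw [← dvd_neg, neg_sub, partialFractionNumerator, mul_sum]
  simp_rw [mul_left_comm B]
  refine prod_X_sub_C_pow_dvd_sub_sum hz k f _ fun i => ?_
  rcases eq_or_ne (k i) 0 with hki | hki
  · simp [hki]
  have hAi : (∏ l ∈ univ.erase i, (X - C (z l)) ^ k l).eval (z i) ≠ 0 := by
    rw [eval_prod, prod_ne_zero_iff]
    intro l hl
    simp [sub_eq_zero, hz.ne (ne_of_mem_erase hl).symm]
  have hBi : B.eval (z i) ≠ 0 := fun hBz => not_isUnit_X_sub_C (z i) <| hB.isUnit_of_dvd'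
    ((dvd_pow_self _ hki).trans (dvd_prod_of_mem (fun l => (X - C (z l)) ^ k l) (mem_univ i)))
    (dvd_iff_isRoot.2 hBz)
  simp only [hc, ← mul_assoc]
  exact X_sub_C_pow_dvd_sub_mul_taylor f _ (by rw [eval_mul]; exact mul_ne_zero hAi hBi) (k i)

end Hermite

theorem bezout_solution_partial_fraction_representation_general
    (M n t : ℕ)
    (an : ℂ) (han : an ≠ 0)
    (z : Fin (M + 1) → ℂ) (hz : Function.Injective z)
    (k : Fin (M + 1) → ℕ) (hk : ∑ j, k j = n)
    (ahat : Polynomial ℂ) (hahat : ahat = C an * ∏ j, (X - C (z j)) ^ (k j))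
    (hcop : IsCoprime ahat (ahat.comp (-X)))
    (ε : ℂ) (ℓ : ℕ) (hstar : (ε = 1 ∧ ℓ = 2) ∨ (ε = -1 ∧ ℓ = 1))
    (p : Polynomial ℂ) (hpdeg : p.degree < (n : ℕ))
    (hpeq : ahat * p + C ε * ((ahat.comp (-X)) * (p.comp (-X))) = C 2 * X ^ (2 * t - ℓ))
    (ω : Polynomial ℂ)
    (hω : ω = (∏ j, (X - C (z j)) ^ (k j)) * ∏ j, (X + C (z j)) ^ (k j))
    (ωi : Fin (M + 1) → Polynomial ℂ)
    (hωi : ∀ i, ωi i = ω / (X - C (z i)) ^ (k i))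
    (c : Fin (M + 1) → ℕ → ℂ)
    (hc : ∀ i j, c i j = (1 / (Nat.factorial j : ℂ)) *
      iteratedDeriv j (fun w : ℂ => 2 * w ^ (2 * t - ℓ) / (ωi i).eval w) (z i)) :
    ∀ w : ℂ, (∀ i, w ≠ -(z i)) →
      p.eval w = (-1 : ℂ) ^ ℓ * an⁻¹ * (∏ j, (w + z j) ^ (k j)) *
        ∑ i, ∑ s ∈ Finset.Icc 1 (k i), (-1 : ℂ) ^ s * c i (k i - s) / (w + z i) ^ s := by
  intro w hw
  set A : ℂ[X] := ∏ j, (X - C (z j)) ^ k j with hA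
  set B : ℂ[X] := ∏ j, (X + C (z j)) ^ k j
  obtain ⟨hε, hεinv⟩ : ε ≠ 0 ∧ ε⁻¹ = (-1) ^ ℓ := by
    rcases hstar with ⟨rfl, rfl⟩ | ⟨rfl, rfl⟩ <;> norm_num
  have hAcomp : ahat.comp (-X) = C (an * (-1) ^ n) * B := by
    rw [hahat, mul_comp, C_comp, comp_neg_X_prod_X_sub_C_pow, hk, ← mul_assoc, ← C_mul]
  have hAB : IsCoprime A B := (hcop.of_isCoprime_of_dvd_left (hahat ▸ dvd_mul_left A _))
    |>.of_isCoprime_of_dvd_right (hAcomp ▸ dvd_mul_left B _)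
  have hωi' : ∀ i, ωi i = (∏ j ∈ univ.erase i, (X - C (z j)) ^ k j) * B := fun i => by
    rw [hωi, hω, hA, ← mul_prod_erase _ _ (mem_univ i), mul_assoc,
      mul_div_cancel_left₀ _ (pow_ne_zero _ (X_sub_C_ne_zero _))]
  have hQ : A ∣ B * partialFractionNumerator z k c - C 2 * X ^ (2 * t - ℓ) :=
    prod_dvd_mul_partialFractionNumerator_sub hz k _ B hAB c fun i j => by simp [hc, hωi']
  have hp : A ∣ B * (C (ε * an * (-1) ^ n) * p.comp (-X)) - C 2 * X ^ (2 * t - ℓ) :=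
    ⟨-(C an * p), by rw [← hpeq, hAcomp, hahat]; simp only [C_mul]; ring⟩
  have hpQ : C (ε * an * (-1) ^ n) * p.comp (-X) = partialFractionNumerator z k c := by
    refine eq_of_dvd_mul_sub_of_degree_lt hAB hp hQ ?_ ?_ <;> rw [hA, degree_prod_X_sub_C_pow, hk]
    · rwa [degree_C_mul (by simp [hε, han]), degree_comp_neg_X]
    · exact hk ▸ degree_partialFractionNumerator_lt z k c
  have heval := congrArg (eval (-w)) hpQ
  rw [eval_mul, eval_C, eval_comp, eval_neg, eval_X, neg_neg,
    eval_neg_partialFractionNumerator z k c hw, hk] at heval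
  rw [← hεinv]
  field_simp
  exact mul_left_cancel₀ (pow_ne_zero n (neg_ne_zero.2 one_ne_zero)) (by linear_combination heval)

/-- Root-based representation of the unique degree-`<n` solution of the
generalized Bezout equation `â(z)p(z) ⋆ â(-z)p(-z) = 2z^{2t-ℓ^⋆}` via (incomplete)
partial fraction coefficients at the roots (with reversed signs) of `â`. -/
theorem bezout_solution_partial_fraction_representation
    (M n t : ℕ) (ht : 1 ≤ t) (htn : t ≤ n)
    (an : ℂ) (han : an ≠ 0)
    (z : Fin (M + 1) → ℂ) (hz : Function.Injective z)
    (k : Fin (M + 1) → ℕ) (hk : ∑ j, k j = n)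
    (ahat : Polynomial ℂ) (hahat : ahat = C an * ∏ j, (X - C (z j)) ^ (k j))
    (hcop : IsCoprime ahat (ahat.comp (-X)))
    (ε : ℂ) (ℓ : ℕ) (hstar : (ε = 1 ∧ ℓ = 2) ∨ (ε = -1 ∧ ℓ = 1))
    (p : Polynomial ℂ) (hpdeg : p.degree < (n : ℕ))
    (hpeq : ahat * p + C ε * ((ahat.comp (-X)) * (p.comp (-X))) = C 2 * X ^ (2 * t - ℓ))
    (ω : Polynomial ℂ)
    (hω : ω = (∏ j, (X - C (z j)) ^ (k j)) * ∏ j, (X + C (z j)) ^ (k j))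
    (ωi : Fin (M + 1) → Polynomial ℂ)
    (hωi : ∀ i, ωi i = ω / (X - C (z i)) ^ (k i))
    (c : Fin (M + 1) → ℕ → ℂ)
    (hc : ∀ i j, c i j = (1 / (Nat.factorial j : ℂ)) *
      iteratedDeriv j (fun w : ℂ => 2 * w ^ (2 * t - ℓ) / (ωi i).eval w) (z i)) :
    ∀ w : ℂ, (∀ i, w ≠ -(z i)) →
      p.eval w = (-1 : ℂ) ^ ℓ * an⁻¹ * (∏ j, (w + z j) ^ (k j)) *
        ∑ i, ∑ s ∈ Finset.Icc 1 (k i), (-1 : ℂ) ^ s * c i (k i - s) / (w + z i) ^ s :=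
  bezout_solution_partial_fraction_representation_general M n t an han z hz k hk ahat hahat hcop ε ℓ
    hstar p hpdeg hpeq ω hω ωi hωi c hc
end

section
/- Let B_3^{(k)}(z) = (1/2)(z+1)²·(z² + 2v z + 1)/(2(v+1)) with v = v^{(k)} > 0, v ≠ 1. Then the polynomial p(z) = (1/(2v))·(−z² + 2(v+1)z − 1) satisfies B_3^{(k)}(z)·p(z) − B_3^{(k)}(−z)·p(−z) = 2z³, and consequently m(z) := B_3^{(k)}(z)p(z)/z³ satisfies m(z) + m(−z) = 2. -/
/-- For the cubic exponential B-spline symbol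
`B₃(z) = (1/2)(z+1)²(z²+2vz+1)/(2(v+1))` with `v > 0`, `v ≠ 1`, the polynomial
`p(z) = (1/(2v))(-z² + 2(v+1)z - 1)` satisfies `B₃(z)p(z) - B₃(-z)p(-z) = 2z³`, and hence
`m(z) := B₃(z)p(z)/z³` satisfies `m(z) + m(-z) = 2` for `z ≠ 0`. -/
theorem cubic_exponential_bspline_interpolatory (v : ℝ) (hv : 0 < v) (hv1 : v ≠ 1)
    (B p : ℂ → ℂ)
    (hB : ∀ z : ℂ, B z = (1 / 2) * (z + 1) ^ 2 * (z ^ 2 + 2 * (v : ℂ) * z + 1) /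
      (2 * ((v : ℂ) + 1)))
    (hp : ∀ z : ℂ, p z = (1 / (2 * (v : ℂ))) * (-z ^ 2 + 2 * ((v : ℂ) + 1) * z - 1)) :
    (∀ z : ℂ, B z * p z - B (-z) * p (-z) = 2 * z ^ 3) ∧
    (∀ z : ℂ, z ≠ 0 → B z * p z / z ^ 3 + B (-z) * p (-z) / (-z) ^ 3 = 2) := by
  have hv0 : (v : ℂ) ≠ 0 := Complex.ofReal_ne_zero.mpr hv.ne'
  have hv1' : (v : ℂ) + 1 ≠ 0 := by
    intro h
    have : (v : ℂ) = -1 := by linear_combination h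
    have : v = -1 := by exact_mod_cast this
    linarith
  have key : ∀ z : ℂ, B z * p z - B (-z) * p (-z) = 2 * z ^ 3 := by
    intro z
    rw [hB z, hB (-z), hp z, hp (-z)]
    field_simp
    ring
  refine ⟨key, fun z hz => ?_⟩
  have h := key z
  have hz3 : z ^ 3 ≠ 0 := pow_ne_zero _ hz
  have hneg : (-z) ^ 3 = -(z ^ 3) := by ring
  rw [hneg, div_neg, ← sub_eq_add_neg, div_sub_div_same, h,
    mul_div_assoc, div_self hz3, mul_one]
end

section
/- Let {â^{(k)}(z), k ≥ 0} be symbols with â^{(k)}(z), â^{(k)}(−z) coprime for each k, such that for each k the points −z_ℓ^{(k)} = −e^{−θ_ℓ/2^{k+1}} are zeros of â^{(k)} of multiplicity τ_ℓ (ℓ = 1,…,N). For each k and 1 ≤ i ≤ n(k) let p_i^{(k)} solve â^{(k)}(z)p_i^{(k)}(z) − â^{(k)}(−z)p_i^{(k)}(−z) = 2z^{2i−1}, and set m_i^{(k)}(z) = â^{(k)}(z)p_i^{(k)}(z)/z^{2i−1}. Then for every k ≥ 0: m_i^{(k)}(z_ℓ^{(k)}) = 2, m_i^{(k)}(−z_ℓ^{(k)})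 = 0, and (d^r/dz^r) m_i^{(k)}(±z_ℓ^{(k)}) = 0 for r = 1,…,τ_ℓ − 1 and ℓ = 1,…,N. -/
/-!
The Bezout identity `â(z)p(z) - â(-z)p(-z) = 2z^{2i-1}` gives `m(z) = 2 + â(-z)p(-z)/z^{2i-1}`.
Since `-z_ℓ` is a zero of order `τ_ℓ` of `â`, the numerator `â p` of `m` vanishes to order `τ_ℓ`
at `-z_ℓ`, and the numerator `â(-z)p(-z)` of `m - 2` vanishes to order `τ_ℓ` at `z_ℓ`. A quotient of
polynomials whose numerator vanishes to order `r + 1` at a point where the denominator does not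
vanish has vanishing derivatives of order `≤ r` there.
-/

open Polynomial Filter Topology

namespace Polynomial

section Algebra

variable {R : Type*} [CommRing R]

theorem X_sub_C_pow_dvd_comp_neg_X {A : R[X]} {x : R} {n : ℕ} (h : (X - C (-x)) ^ n ∣ A) :
    (X - C x) ^ n ∣ A.comp (-X) := by
  obtain ⟨B, rfl⟩ := h
  have hneg : (X - C (-x)).comp (-X) = -(X - C x) := by
    rw [sub_comp, X_comp, C_comp, map_neg]; ring
  rw [mul_comp, pow_comp, hneg, neg_pow]
  exact (dvd_mul_left _ _).mul_right _

theorem X_sub_C_pow_dvd_derivative_mul_sub {x : R} {Q S : R[X]} {n : ℕ}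
    (h : (X - C x) ^ (n + 1) ∣ Q) :
    (X - C x) ^ n ∣ derivative Q * S - Q * derivative S := by
  have hQ' : (X - C x) ^ n ∣ derivative Q := by
    obtain ⟨B, rfl⟩ := h
    rw [derivative_mul, derivative_X_sub_C_pow, Nat.add_sub_cancel]
    exact dvd_add ((dvd_mul_left _ _).mul_right _) ((pow_dvd_pow _ n.le_succ).mul_right _)
  exact dvd_sub (hQ'.mul_right _) (((pow_dvd_pow _ n.le_succ).trans h).mul_right _)

end Algebra

variable {𝕜 : Type*} [NontriviallyNormedField 𝕜]

theorem iteratedDeriv_eval (A : 𝕜[X]) (r : ℕ) :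
    iteratedDeriv r (fun w => A.eval w) = fun w => (derivative^[r] A).eval w := by
  induction r with
  | zero => simp
  | succ r ih =>
    ext w
    rw [iteratedDeriv_succ, ih, Function.iterate_succ_apply', Polynomial.deriv]

theorem X_sub_C_pow_dvd_of_iteratedDeriv_eval_eq_zero [CharZero 𝕜] {A : 𝕜[X]} {x : 𝕜} {n : ℕ}
    (h : ∀ r < n, iteratedDeriv r (fun w => A.eval w) x = 0) : (X - C x) ^ n ∣ A := by
  rcases eq_or_ne A 0 with rfl | hA
  · exact dvd_zero _
  rcases n with _ | n
  · exact one_dvd _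
  have hroots : ∀ r ≤ n, (derivative^[r] A).IsRoot x := fun r hr => by
    simpa [iteratedDeriv_eval] using h r (Nat.lt_succ_of_le hr)
  exact (pow_dvd_pow _ (lt_rootMultiplicity_of_isRoot_iterate_derivative hA hroots)).trans
    (pow_rootMultiplicity_dvd A x)

theorem deriv_eval_div_eval {Q S : 𝕜[X]} {w : 𝕜} (hw : S.eval w ≠ 0) :
    deriv (fun u => Q.eval u / S.eval u) w =
      (derivative Q * S - Q * derivative S).eval w / (S * S).eval w := by
  rw [deriv_fun_div Q.differentiableAt S.differentiableAt hw]
  simp [Polynomial.deriv, sq]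

theorem iteratedDeriv_eval_div_eval_eq_zero {Q S : 𝕜[X]} {x : 𝕜} {r : ℕ} (hS : S.eval x ≠ 0)
    (hQ : (X - C x) ^ (r + 1) ∣ Q) : iteratedDeriv r (fun w => Q.eval w / S.eval w) x = 0 := by
  induction r generalizing Q S with
  | zero =>
    obtain ⟨B, rfl⟩ := hQ
    simp
  | succ r ih =>
    have hderiv : deriv (fun w => Q.eval w / S.eval w) =ᶠ[𝓝 x]
        fun w => (derivative Q * S - Q * derivative S).eval w / (S * S).eval w := by
      filter_upwards [S.continuousAt.eventually_ne hS] with w hw using deriv_eval_div_eval hw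
    rw [iteratedDeriv_succ', hderiv.iteratedDeriv_eq]
    exact ih (by simpa using mul_ne_zero hS hS) (X_sub_C_pow_dvd_derivative_mul_sub hQ)

end Polynomial

section InterpolatorySymbol

variable {𝕜 : Type*} [NontriviallyNormedField 𝕜] {a P : 𝕜[X]} {q r : ℕ} {x : 𝕜}

theorem eval_mul_eval_div_pow_eq_two (hbez : a * P - a.comp (-X) * P.comp (-X) = C 2 * X ^ q)
    (hx : x ≠ 0) (ha : a.eval (-x) = 0) : a.eval x * P.eval x / x ^ q = 2 := by
  have h := congrArg (eval x) hbez
  simp only [eval_sub, eval_mul, eval_comp, eval_neg, eval_X, ha, eval_C, eval_pow] at h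
  have hAP : a.eval x * P.eval x = 2 * x ^ q := by linear_combination h
  rw [hAP, mul_div_cancel_right₀ _ (pow_ne_zero q hx)]

theorem iteratedDeriv_eval_mul_eval_div_pow_neg_eq_zero (hx : x ≠ 0)
    (ha : (X - C (-x)) ^ (r + 1) ∣ a) :
    iteratedDeriv r (fun w => a.eval w * P.eval w / w ^ q) (-x) = 0 := by
  simpa using iteratedDeriv_eval_div_eval_eq_zero (S := X ^ q)
    (by simpa using pow_ne_zero q (neg_ne_zero.2 hx)) (ha.mul_right P)

theorem iteratedDeriv_eval_mul_eval_div_pow_eq_zero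
    (hbez : a * P - a.comp (-X) * P.comp (-X) = C 2 * X ^ q) (hx : x ≠ 0) (hr : 0 < r)
    (ha : (X - C (-x)) ^ (r + 1) ∣ a) :
    iteratedDeriv r (fun w => a.eval w * P.eval w / w ^ q) x = 0 := by
  set B := a.comp (-X) * P.comp (-X)
  have hlocal : (fun w => a.eval w * P.eval w / w ^ q) =ᶠ[𝓝 x]
      fun w => 2 + B.eval w / (X ^ q : 𝕜[X]).eval w := by
    filter_upwards [eventually_ne_nhds hx] with w hw
    have h := congrArg (eval w) hbez
    simp only [eval_sub, eval_mul, eval_C, eval_pow, eval_X] at h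
    have hAP : a.eval w * P.eval w = 2 * w ^ q + B.eval w := by linear_combination h
    rw [hAP, eval_pow, eval_X, add_div, mul_div_cancel_right₀ _ (pow_ne_zero q hw)]
  rw [hlocal.iteratedDeriv_eq, iteratedDeriv_const_add hr]
  exact iteratedDeriv_eval_div_eval_eq_zero (by simpa using pow_ne_zero q hx)
    ((X_sub_C_pow_dvd_comp_neg_X ha).mul_right _)

end InterpolatorySymbol

theorem nonstationary_interpolatory_reproduction_conditions_general
    (N : ℕ) (θ : Fin N → ℂ) (τ : Fin N → ℕ)
    (z : ℕ → Fin N → ℂ)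
    (hz : ∀ k l, z k l = Complex.exp (-(θ l) / 2 ^ (k + 1)))
    (ahat : ℕ → Polynomial ℂ)
    (hroot : ∀ k l, (ahat k).eval (-(z k l)) = 0)
    (hrootder : ∀ k l, ∀ r : ℕ, 1 ≤ r → r ≤ τ l - 1 →
      iteratedDeriv r (fun w : ℂ => (ahat k).eval w) (-(z k l)) = 0)
    (n : ℕ → ℕ) (p : ℕ → ℕ → Polynomial ℂ)
    (hp : ∀ k i, 1 ≤ i → i ≤ n k →
      (ahat k) * (p k i) - ((ahat k).comp (-X)) * ((p k i).comp (-X)) =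
        C 2 * X ^ (2 * i - 1))
    (m : ℕ → ℕ → ℂ → ℂ)
    (hm : ∀ k i (w : ℂ), m k i w = (ahat k).eval w * (p k i).eval w / w ^ (2 * i - 1)) :
    ∀ k, ∀ i, 1 ≤ i → i ≤ n k → ∀ l,
      m k i (z k l) = 2 ∧ m k i (-(z k l)) = 0 ∧
        ∀ r : ℕ, 1 ≤ r → r ≤ τ l - 1 →
          iteratedDeriv r (m k i) (z k l) = 0 ∧
            iteratedDeriv r (m k i) (-(z k l)) = 0 := by
  intro k i hi1 hi2 l
  have hx : z k l ≠ 0 := by rw [hz]; exact Complex.exp_ne_zero _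
  have hmki : m k i = fun w => (ahat k).eval w * (p k i).eval w / w ^ (2 * i - 1) := funext (hm k i)
  have hdvd : ∀ r, r ≤ τ l - 1 → (X - C (-z k l)) ^ (r + 1) ∣ ahat k := fun r hr =>
    X_sub_C_pow_dvd_of_iteratedDeriv_eval_eq_zero fun j hj => by
      rcases j with _ | j
      · simpa using hroot k l
      · exact hrootder k l (j + 1) j.succ_pos (by omega)
  refine ⟨?_, ?_, fun r hr1 hr2 => ⟨?_, ?_⟩⟩
  · rw [hmki]
    exact eval_mul_eval_div_pow_eq_two (hp k i hi1 hi2) hx (hroot k l)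
  · simp [hm, hroot k l]
  · rw [hmki]
    exact iteratedDeriv_eval_mul_eval_div_pow_eq_zero (hp k i hi1 hi2) hx hr1 (hdvd r hr2)
  · rw [hmki]
    exact iteratedDeriv_eval_mul_eval_div_pow_neg_eq_zero hx (hdvd r hr2)

/-- For non-stationary symbols `â⁽ᵏ⁾` coprime with `â⁽ᵏ⁾(-·)` and having
zeros of multiplicity `τ_ℓ` at `-z_ℓ⁽ᵏ⁾ = -e^{-θ_ℓ/2^{k+1}}`, the interpolatory symbols
`m_i⁽ᵏ⁾(z) = â⁽ᵏ⁾(z)p_i⁽ᵏ⁾(z)/z^{2i-1}` (with `p_i⁽ᵏ⁾` solving the Bezout equation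
`â⁽ᵏ⁾(z)p(z) - â⁽ᵏ⁾(-z)p(-z) = 2z^{2i-1}`) satisfy the reproduction conditions
`m_i⁽ᵏ⁾(z_ℓ⁽ᵏ⁾)=2`, `m_i⁽ᵏ⁾(-z_ℓ⁽ᵏ⁾)=0` and vanishing derivatives up to order `τ_ℓ-1`
at `±z_ℓ⁽ᵏ⁾`. -/
theorem nonstationary_interpolatory_reproduction_conditions
    (N : ℕ) (θ : Fin N → ℂ) (τ : Fin N → ℕ)
    (z : ℕ → Fin N → ℂ)
    (hz : ∀ k l, z k l = Complex.exp (-(θ l) / 2 ^ (k + 1)))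
    (ahat : ℕ → Polynomial ℂ)
    (hcop : ∀ k, IsCoprime (ahat k) ((ahat k).comp (-X)))
    (hroot : ∀ k l, (ahat k).eval (-(z k l)) = 0)
    (hrootder : ∀ k l, ∀ r : ℕ, 1 ≤ r → r ≤ τ l - 1 →
      iteratedDeriv r (fun w : ℂ => (ahat k).eval w) (-(z k l)) = 0)
    (n : ℕ → ℕ) (p : ℕ → ℕ → Polynomial ℂ)
    (hp : ∀ k i, 1 ≤ i → i ≤ n k →
      (ahat k) * (p k i) - ((ahat k).comp (-X)) * ((p k i).comp (-X)) =
        C 2 * X ^ (2 * i - 1))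
    (m : ℕ → ℕ → ℂ → ℂ)
    (hm : ∀ k i (w : ℂ), m k i w = (ahat k).eval w * (p k i).eval w / w ^ (2 * i - 1)) :
    ∀ k, ∀ i, 1 ≤ i → i ≤ n k → ∀ l,
      m k i (z k l) = 2 ∧ m k i (-(z k l)) = 0 ∧
        ∀ r : ℕ, 1 ≤ r → r ≤ τ l - 1 →
          iteratedDeriv r (m k i) (z k l) = 0 ∧
            iteratedDeriv r (m k i) (-(z k l)) = 0 :=
  nonstationary_interpolatory_reproduction_conditions_general N θ τ z hz ahat hroot hrootder n p hp
    m hm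
end

section
/- Let v > 0 and α, β ∈ ℝ with the factorization constraint (4α+β)² ≥ 4α, and set â(z) = B(z)·(α + βz + (1−2α−2β)z² + βz³ + αz⁴) where B(z) = (z+1)²(z²+2vz+1)/(4(v+1)). If α ≠ 0 and β ∉ {0, 1/2 − 2α, (4v²α − 4α + 1)/(2(1−v))}, then â(z) and â(−z) are relatively prime. -/
open Polynomial

/-- Case: `a² + 2va + 1 = 0` and `c(-a) = 0` lead to a contradiction. -/
lemma caseK_aux (v α β : ℝ) (hv : 0 < v)
    (hβ2 : β ≠ (4 * v ^ 2 * α - 4 * α + 1) / (2 * (1 - v))) (a : ℂ)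
    (e1 : a ^ 2 + 2 * (v : ℂ) * a + 1 = 0)
    (hc : (α : ℂ) * a ^ 4 - (β : ℂ) * a ^ 3 + ((1 : ℂ) - 2 * α - 2 * β) * a ^ 2
      - (β : ℂ) * a + α = 0) : False := by
  have hK : ((4 * α * v ^ 2 - 4 * α + 1 + 2 * β * (v - 1) : ℝ) : ℂ) * (2 * (v : ℂ) * a + 1) = 0 := by
    push_cast
    linear_combination ((α : ℂ) * a ^ 2 - ((β : ℂ) + 2 * α * v) * a
      + (1 - 3 * (α : ℂ) - 2 * β + 2 * β * v + 4 * α * v ^ 2)) * e1 - hc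
  rcases mul_eq_zero.mp hK with h | h
  · rw [Complex.ofReal_eq_zero] at h
    rcases eq_or_ne v 1 with hv1 | hv1
    · rw [hv1] at h; nlinarith [h]
    · apply hβ2
      rw [eq_div_iff (by intro h2; apply hv1; linarith)]
      linear_combination -h
  · -- 2va + 1 = 0, then a² = 0 from e1, so a = 0, then 1 = 0
    have ha2 : a ^ 2 = 0 := by linear_combination e1 - h
    have ha : a = 0 := by
      exact pow_eq_zero_iff (n := 2) (by norm_num) |>.mp ha2
    rw [ha] at h
    norm_num at h

/-- Case: `c(a) = 0` and `c(-a) = 0` lead to a contradiction. -/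
lemma case9_aux (α β : ℝ) (hα : α ≠ 0) (hβ0 : β ≠ 0) (hβ1 : β ≠ 1 / 2 - 2 * α) (a : ℂ)
    (hc1 : (α : ℂ) + (β : ℂ) * a + ((1 : ℂ) - 2 * α - 2 * β) * a ^ 2
      + (β : ℂ) * a ^ 3 + α * a ^ 4 = 0)
    (hc2 : (α : ℂ) * a ^ 4 - (β : ℂ) * a ^ 3 + ((1 : ℂ) - 2 * α - 2 * β) * a ^ 2
      - (β : ℂ) * a + α = 0) : False := by
  have hd : (β : ℂ) * (a * (a ^ 2 + 1)) = 0 := by linear_combination (hc1 - hc2) / 2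
  rcases mul_eq_zero.mp hd with h | h
  · exact hβ0 (by exact_mod_cast h)
  rcases mul_eq_zero.mp h with h | h
  · rw [h] at hc1
    apply hα
    have : ((α : ℝ) : ℂ) = 0 := by push_cast; linear_combination hc1
    exact_mod_cast this
  · have hT : ((8 * α + 4 * β - 2 : ℝ) : ℂ) = 0 := by
      push_cast
      linear_combination hc1 + hc2 - (2 * (α : ℂ) * (a ^ 2 - 1) + 2 * (1 - 2 * (α : ℂ) - 2 * β)) * h
    rw [Complex.ofReal_eq_zero] at hT
    apply hβ1; linarith

/-- Core: no common complex root of `P(z)` and `P(-z)`. -/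
lemma keyC (v α β : ℝ) (hv : 0 < v)
    (hα : α ≠ 0) (hβ0 : β ≠ 0) (hβ1 : β ≠ 1 / 2 - 2 * α)
    (hβ2 : β ≠ (4 * v ^ 2 * α - 4 * α + 1) / (2 * (1 - v))) (a : ℂ)
    (h1 : (a + 1) ^ 2 * (a ^ 2 + 2 * (v : ℂ) * a + 1) *
      ((α : ℂ) + (β : ℂ) * a + ((1 : ℂ) - 2 * α - 2 * β) * a ^ 2 + (β : ℂ) * a ^ 3 + α * a ^ 4) = 0)
    (h2 : (-a + 1) ^ 2 * (a ^ 2 - 2 * (v : ℂ) * a + 1) *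
      ((α : ℂ) * a ^ 4 - (β : ℂ) * a ^ 3 + ((1 : ℂ) - 2 * α - 2 * β) * a ^ 2
        - (β : ℂ) * a + α) = 0) : False := by
  have hvC : ((8 : ℂ) + 8 * v) ≠ 0 := by
    intro h
    have : (8 + 8 * v : ℝ) = 0 := by exact_mod_cast h
    linarith
  rcases mul_eq_zero.mp h1 with h1' | hc1
  · rcases mul_eq_zero.mp h1' with h1a | h1b
    · -- a = -1
      have ha : a = -1 := by
        have := pow_eq_zero_iff (n := 2) (by norm_num) |>.mp h1a
        linear_combination this
      rw [ha] at h2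
      apply hvC
      linear_combination h2
    · -- a² + 2va + 1 = 0
      rcases mul_eq_zero.mp h2 with h2' | hc2
      · rcases mul_eq_zero.mp h2' with h2a | h2b
        · -- a = 1
          have ha : a = 1 := by
            have := pow_eq_zero_iff (n := 2) (by norm_num) |>.mp h2a
            linear_combination -this
          rw [ha] at h1b
          apply hvC
          linear_combination 4 * h1b
        · -- both quadratics vanish: 4va = 0
          have hva : (4 : ℂ) * v * a = 0 := by linear_combination h1b - h2b
          have hv0 : ((4 : ℂ) * v) ≠ 0 := by
            intro h
            have : (4 * v : ℝ) = 0 := by exact_mod_cast h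
            linarith
          have ha : a = 0 := by
            rcases mul_eq_zero.mp hva with h | h
            · exact absurd h hv0
            · exact h
          rw [ha] at h1b
          norm_num at h1b
      · exact caseK_aux v α β hv hβ2 a h1b hc2
  · -- c(a) = 0
    rcases mul_eq_zero.mp h2 with h2' | hc2
    · rcases mul_eq_zero.mp h2' with h2a | h2b
      · -- a = 1: c(1) = 1 ≠ 0
        have ha : a = 1 := by
          have := pow_eq_zero_iff (n := 2) (by norm_num) |>.mp h2a
          linear_combination -this
        rw [ha] at hc1
        have : ((1 : ℝ) : ℂ) = 0 := by push_cast; linear_combination hc1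
        norm_num at this
      · -- a² - 2va + 1 = 0 and c(a) = 0: apply caseK to -a
        apply caseK_aux v α β hv hβ2 (-a)
        · linear_combination h2b
        · linear_combination hc1
    · exact case9_aux α β hα hβ0 hβ1 a hc1 hc2

/-- For `â(z) = B₃(z)(α + βz + (1-2α-2β)z² + βz³ + αz⁴)` with
`B₃(z) = (z+1)²(z²+2vz+1)/(4(v+1))`, `v > 0`, `(4α+β)² ≥ 4α`, if `α ≠ 0` and
`β ∉ {0, 1/2-2α, (4v²α-4α+1)/(2(1-v))}`, then `â(z)` and `â(-z)` are relatively prime. -/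
theorem five_term_affine_combination_coprime (v α β : ℝ)
    (hv : 0 < v) (hfact : (4 * α + β) ^ 2 ≥ 4 * α)
    (hα : α ≠ 0) (hβ0 : β ≠ 0) (hβ1 : β ≠ 1 / 2 - 2 * α)
    (hβ2 : β ≠ (4 * v ^ 2 * α - 4 * α + 1) / (2 * (1 - v)))
    (B cpoly ahat : Polynomial ℝ)
    (hB : B = C ((4 * (v + 1))⁻¹) * ((X + 1) ^ 2 * (X ^ 2 + C (2 * v) * X + 1)))
    (hcpoly : cpoly = C α + C β * X + C (1 - 2 * α - 2 * β) * X ^ 2 +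
      C β * X ^ 3 + C α * X ^ 4)
    (hahat : ahat = B * cpoly) :
    IsCoprime ahat (ahat.comp (-X)) := by
  rw [Polynomial.isCoprime_iff_aeval_ne_zero_of_isAlgClosed (k := ℝ) ℂ]
  intro a
  by_contra h
  push_neg at h
  obtain ⟨h1, h2⟩ := h
  rw [aeval_comp] at h2
  subst hahat hB hcpoly
  simp only [map_mul, map_add, map_pow, map_one, map_neg, aeval_C, aeval_X,
    Complex.coe_algebraMap] at h1 h2
  push_cast at h1 h2
  have hconst : ((4 * (v + 1) : ℝ) : ℂ)⁻¹ ≠ 0 := by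
    simp only [ne_eq, inv_eq_zero, Complex.ofReal_eq_zero]
    positivity
  rw [mul_assoc] at h1 h2
  replace h1 := (mul_eq_zero.mp h1).resolve_left (by push_cast at hconst ⊢; exact hconst)
  replace h2 := (mul_eq_zero.mp h2).resolve_left (by push_cast at hconst ⊢; exact hconst)
  apply keyC v α β hv hα hβ0 hβ1 hβ2 a
  · linear_combination h1
  · linear_combination h2
end
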